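/- arXiv:2307.10647 — 2 statements merged into one kernel-verified Lean document; each statement's English description precedes it below -/
import Mathlib

section
/- Let X and Y be real Banach spaces and let X ⊕₁ Y denote the product X × Y with the norm ‖(x, y)‖ = ‖x‖ + ‖y‖. For every x ∈ S_X, the Δ-constant of the point (x, 0) in X ⊕₁ Y equals the Δ-constant of x in X, i.e., Δc_{X⊕₁Y}((x, 0)) = Δc_X(x). -/
open Set Metric Filter

variable {X : Type*} [NormedAddCommGroup X] [NormedSpace ℝ X]

/-- The slice `S(f, δ)` of the closed unit ball of `X`, determined by a norm-one functional
`f` and `δ > 0` (the norm and positivity conditions are imposed at use sites). -/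
def unitBallSlice (f : X →L[ℝ] ℝ) (δ : ℝ) : Set X :=
  {y | ‖y‖ ≤ 1 ∧ 1 - δ < f y}

/-- The Daugavet constant of a point: the infimum over all slices of the unit ball of the
supremum of distances from `x` to points of the slice. -/
noncomputable def Dc (x : X) : ℝ :=
  sInf {r | ∃ (f : X →L[ℝ] ℝ) (δ : ℝ), ‖f‖ = 1 ∧ 0 < δ ∧
    r = sSup ((fun y => ‖x - y‖) '' unitBallSlice f δ)}

/-- The Δ-constant of a point: the infimum over all slices of the unit ball containing `x`
of the supremum of distances from `x` to points of the slice. -/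
noncomputable def DeltaC (x : X) : ℝ :=
  sInf {r | ∃ (f : X →L[ℝ] ℝ) (δ : ℝ), ‖f‖ = 1 ∧ 0 < δ ∧ x ∈ unitBallSlice f δ ∧
    r = sSup ((fun y => ‖x - y‖) '' unitBallSlice f δ)}

/-- The image of a slice under distance-to-`x` is bounded above (by `2`). -/
lemma bddAbove_slice_dist {x : X} (hx : ‖x‖ ≤ 1) (f : X →L[ℝ] ℝ) (δ : ℝ) :
    BddAbove ((fun y => ‖x - y‖) '' unitBallSlice f δ) := by
  refine ⟨2, ?_⟩
  rintro r ⟨y, ⟨hy, -⟩, rfl⟩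
  calc ‖x - y‖ ≤ ‖x‖ + ‖y‖ := norm_sub_le _ _
    _ ≤ 2 := by linarith

/-- Key geometric step: a point `u` of the slice `S(f, (δ + 1 - f x)/2)` can be pushed
away from `x` along the ray from `x` through `u`, producing a point `w` of the slice
`S(f, δ)` with `‖x - w‖ ≥ ‖x - u‖ + (1 - ‖u‖)`. -/
lemma key_step {f : X →L[ℝ] ℝ} {x u : X} (hx : ‖x‖ = 1) (hu : ‖u‖ ≤ 1)
    {δ : ℝ} (hfx : 1 - δ < f x) (hfx1 : f x ≤ 1)
    (hfu : 1 - (δ + 1 - f x) / 2 < f u) :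
    ∃ w : X, ‖w‖ ≤ 1 ∧ 1 - δ < f w ∧ ‖x - u‖ + (1 - ‖u‖) ≤ ‖x - w‖ := by
  by_cases h : u = x
  · subst h
    exact ⟨u, hx.le, hfx, by simp [hx]⟩
  · set t := ‖x - u‖ with ht
    have ht0 : 0 < t := by
      rw [ht, norm_pos_iff, sub_ne_zero]
      exact fun h' => h h'.symm
    have htge : 1 - ‖u‖ ≤ t := by
      have h1 := norm_sub_norm_le x u
      rw [hx] at h1; linarith
    set s := (1 - ‖u‖) / t with hs
    have hs0 : 0 ≤ s := div_nonneg (by linarith) ht0.le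
    have hs1 : s ≤ 1 := (div_le_one ht0).mpr htge
    have hst : s * t = 1 - ‖u‖ := div_mul_cancel₀ _ ht0.ne'
    refine ⟨u + s • (u - x), ?_, ?_, ?_⟩
    · calc ‖u + s • (u - x)‖ ≤ ‖u‖ + ‖s • (u - x)‖ := norm_add_le _ _
        _ = ‖u‖ + s * t := by
            rw [norm_smul, Real.norm_eq_abs, abs_of_nonneg hs0, ht, norm_sub_rev]
        _ = 1 := by rw [hst]; ring
    · have hw : f (u + s • (u - x)) = f u + s * (f u - f x) := by
        simp [map_add, map_smul, map_sub, smul_eq_mul]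
      rw [hw]
      rcases le_or_gt (f x) (f u) with hc | hc
      · have : 0 ≤ s * (f u - f x) := mul_nonneg hs0 (by linarith)
        nlinarith
      · have : (1 - s) * (f x - f u) ≥ 0 := mul_nonneg (by linarith) (by linarith)
        nlinarith
    · have hxw : x - (u + s • (u - x)) = (1 + s) • (x - u) := by
        rw [smul_sub, add_smul, one_smul, smul_sub]
        abel
      rw [hxw, norm_smul, Real.norm_eq_abs, abs_of_nonneg (by linarith), ← ht]
      nlinarith

/-- In the `ℓ₁`-sum `X ⊕₁ Y`, the Δ-constant of `(x, 0)` with `x ∈ S_X` equals the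
Δ-constant of `x` in `X`. -/
theorem deltaConstant_l1Sum {Y : Type*} [NormedAddCommGroup Y] [NormedSpace ℝ Y]
    [CompleteSpace X] [CompleteSpace Y] (x : X) (hx : ‖x‖ = 1) :
    DeltaC ((WithLp.equiv 1 (X × Y)).symm (x, (0 : Y))) = DeltaC x := by
  classical
  set x₀ : WithLp 1 (X × Y) := (WithLp.equiv 1 (X × Y)).symm (x, (0 : Y)) with hx₀
  -- basic norm computation on the ℓ¹-sum
  have hnorm : ∀ z : WithLp 1 (X × Y), ‖z‖ = ‖z.fst‖ + ‖z.snd‖ := by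
    intro z
    rw [WithLp.prod_norm_eq_add (by norm_num)]
    norm_num
  -- the canonical embedding and projection
  set ι : X →L[ℝ] WithLp 1 (X × Y) :=
    (WithLp.prodContinuousLinearEquiv 1 ℝ X Y).symm.toContinuousLinearMap.comp
      (ContinuousLinearMap.inl ℝ X Y) with hιdef
  set π : WithLp 1 (X × Y) →L[ℝ] X :=
    (ContinuousLinearMap.fst ℝ X Y).comp
      (WithLp.prodContinuousLinearEquiv 1 ℝ X Y).toContinuousLinearMap with hπdef
  have hιnorm : ∀ y : X, ‖ι y‖ = ‖y‖ := by
    intro y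
    have : (ι y).fst = y := rfl
    have h2 : (ι y).snd = (0 : Y) := rfl
    rw [hnorm, this, h2, norm_zero, add_zero]
  have hιle : ‖ι‖ ≤ 1 := by
    refine ContinuousLinearMap.opNorm_le_bound _ zero_le_one fun y => ?_
    rw [hιnorm, one_mul]
  have hπι : ∀ (F : WithLp 1 (X × Y) →L[ℝ] ℝ) (y : X), F (ι y) = (F.comp ι) y := fun _ _ => rfl
  have hx₀norm : ‖x₀‖ = 1 := by
    have : x₀.fst = x := rfl
    have h2 : x₀.snd = (0 : Y) := rfl
    rw [hnorm, this, h2, norm_zero, add_zero, hx]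
  have hιx : ι x = x₀ := rfl
  -- norm of `f ∘ π`
  have hcompnorm : ∀ f : X →L[ℝ] ℝ, ‖f‖ = 1 → ‖f.comp π‖ = 1 := by
    intro f hf
    refine le_antisymm ?_ ?_
    · refine ContinuousLinearMap.opNorm_le_bound _ zero_le_one fun z => ?_
      have h1 : (f.comp π) z = f z.fst := rfl
      have h2 : ‖z.fst‖ ≤ ‖z‖ := by
        rw [hnorm]; exact le_add_of_nonneg_right (norm_nonneg _)
      calc ‖(f.comp π) z‖ = ‖f z.fst‖ := by rw [h1]
        _ ≤ ‖f‖ * ‖z.fst‖ := f.le_opNorm _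
        _ ≤ 1 * ‖z‖ := by rw [hf]; simpa using h2
    · have hfe : f = (f.comp π).comp ι := by ext y; rfl
      calc (1 : ℝ) = ‖f‖ := hf.symm
        _ = ‖(f.comp π).comp ι‖ := by rw [← hfe]
        _ ≤ ‖f.comp π‖ * ‖ι‖ := ContinuousLinearMap.opNorm_comp_le _ _
        _ ≤ ‖f.comp π‖ * 1 := by
            exact mul_le_mul_of_nonneg_left hιle (ContinuousLinearMap.opNorm_nonneg _)
        _ = ‖f.comp π‖ := mul_one _
  -- the two defining sets
  set A : Set ℝ := {r | ∃ (f : X →L[ℝ] ℝ) (δ : ℝ), ‖f‖ = 1 ∧ 0 < δ ∧ x ∈ unitBallSlice f δ ∧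
    r = sSup ((fun y => ‖x - y‖) '' unitBallSlice f δ)} with hA
  set B : Set ℝ := {r | ∃ (F : WithLp 1 (X × Y) →L[ℝ] ℝ) (δ : ℝ), ‖F‖ = 1 ∧ 0 < δ ∧
    x₀ ∈ unitBallSlice F δ ∧
    r = sSup ((fun z => ‖x₀ - z‖) '' unitBallSlice F δ)} with hB
  have hgoal : DeltaC x₀ = sInf B := rfl
  have hgoal' : DeltaC x = sInf A := rfl
  -- nonnegativity of elements
  have hA0 : ∀ r ∈ A, (0 : ℝ) ≤ r := by
    rintro r ⟨f, δ, hf1, hδ, hxm, rfl⟩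
    have := le_csSup (bddAbove_slice_dist hxm.1 f δ) ⟨x, hxm, rfl⟩
    simpa using this
  have hB0 : ∀ r ∈ B, (0 : ℝ) ≤ r := by
    rintro r ⟨F, δ, hF1, hδ, hxm, rfl⟩
    have := le_csSup (bddAbove_slice_dist hxm.1 F δ) ⟨x₀, hxm, rfl⟩
    simpa using this
  -- Hahn-Banach functional norming x
  obtain ⟨g, hg1, hgx⟩ := exists_dual_vector ℝ x (by rw [← norm_ne_zero_iff, hx]; norm_num)
  rw [hx] at hgx
  have hgxR : g x = 1 := by exact_mod_cast hgx
  have hAne : A.Nonempty := by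
    refine ⟨_, g, 1, hg1, one_pos, ⟨hx.le, by rw [hgxR]; norm_num⟩, rfl⟩
  have hBne : B.Nonempty := by
    refine ⟨_, g.comp π, 1, hcompnorm g hg1, one_pos, ⟨hx₀norm.le, ?_⟩, rfl⟩
    have : (g.comp π) x₀ = g x := rfl
    rw [this, hgxR]; norm_num
  rw [hgoal, hgoal']
  apply le_antisymm
  · -- sInf B ≤ sInf A
    refine le_csInf hAne ?_
    rintro r ⟨f, δ, hf1, hδ, ⟨hx1, hfx⟩, rfl⟩
    have hfx1 : f x ≤ 1 := by
      have := f.le_opNorm x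
      rw [hf1, hx, one_mul] at this
      calc f x ≤ ‖f x‖ := le_abs_self _
        _ ≤ 1 := this
    set δ' := (δ + 1 - f x) / 2 with hδ'
    have hδ'pos : 0 < δ' := by rw [hδ']; linarith
    have hFmem : x₀ ∈ unitBallSlice (f.comp π) δ' := by
      refine ⟨hx₀norm.le, ?_⟩
      have : (f.comp π) x₀ = f x := rfl
      rw [this, hδ']; linarith
    refine le_trans (csInf_le ⟨0, fun b hb => hB0 b hb⟩
      ⟨f.comp π, δ', hcompnorm f hf1, hδ'pos, hFmem, rfl⟩) ?_
    refine csSup_le ⟨_, ⟨x₀, hFmem, rfl⟩⟩ ?_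
    rintro d ⟨z, ⟨hz1, hzF⟩, rfl⟩
    have hz1' : ‖z.fst‖ + ‖z.snd‖ ≤ 1 := by rw [← hnorm]; exact hz1
    have hzfst : ‖z.fst‖ ≤ 1 := by
      have : (0 : ℝ) ≤ ‖z.snd‖ := norm_nonneg _
      linarith
    have hzf : 1 - δ' < f z.fst := hzF
    obtain ⟨w, hw1, hwf, hwd⟩ := key_step hx hzfst hfx hfx1 hzf
    have hxz : ‖x₀ - z‖ = ‖x - z.fst‖ + ‖z.snd‖ := by
      rw [hnorm]
      have h1 : (x₀ - z).fst = x - z.fst := rfl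
      have h2 : (x₀ - z).snd = (0 : Y) - z.snd := rfl
      rw [h1, h2, zero_sub, norm_neg]
    calc ‖x₀ - z‖ = ‖x - z.fst‖ + ‖z.snd‖ := hxz
      _ ≤ ‖x - z.fst‖ + (1 - ‖z.fst‖) := by linarith
      _ ≤ ‖x - w‖ := hwd
      _ ≤ sSup ((fun y => ‖x - y‖) '' unitBallSlice f δ) :=
          le_csSup (bddAbove_slice_dist hx1 f δ) ⟨w, ⟨hw1, hwf⟩, rfl⟩
  · -- sInf A ≤ sInf B
    refine le_csInf hBne ?_
    rintro r ⟨F, δ, hF1, hδ, ⟨hx₀1, hFx⟩, rfl⟩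
    set f : X →L[ℝ] ℝ := F.comp ι with hfdef
    have hfx : 1 - δ < f x := by
      have : f x = F x₀ := by rw [hfdef]; exact (congrArg F hιx)
      rw [this]; exact hFx
    have hBbdd := bddAbove_slice_dist hx₀norm.le F δ
    have hemb : ∀ y : X, ‖y‖ ≤ 1 → 1 - δ < f y →
        ‖x - y‖ ≤ sSup ((fun z => ‖x₀ - z‖) '' unitBallSlice F δ) := by
      intro y hy1 hfy
      have hmem : ι y ∈ unitBallSlice F δ := ⟨by rw [hιnorm]; exact hy1, hfy⟩
      have heq : ‖x₀ - ι y‖ = ‖x - y‖ := by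
        rw [← hιx, ← map_sub, hιnorm]
      calc ‖x - y‖ = ‖x₀ - ι y‖ := heq.symm
        _ ≤ _ := le_csSup hBbdd ⟨ι y, hmem, rfl⟩
    by_cases hf0 : f = 0
    · -- degenerate case: f = 0, so δ > 1 and every point of the ball embeds
      have hδ1 : 1 - δ < 0 := by
        have := hfx
        rw [hf0] at this
        simpa using this
      refine le_trans (csInf_le ⟨0, fun b hb => hA0 b hb⟩
        ⟨g, 1, hg1, one_pos, ⟨hx.le, by rw [hgxR]; norm_num⟩, rfl⟩) ?_
      refine csSup_le ⟨_, ⟨x, ⟨hx.le, by rw [hgxR]; norm_num⟩, rfl⟩⟩ ?_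
      rintro d ⟨y, ⟨hy1, -⟩, rfl⟩
      exact hemb y hy1 (by rw [hf0]; simpa using hδ1)
    · -- main case: normalize f
      have hfpos : 0 < ‖f‖ := by
        rw [norm_pos_iff]; exact hf0
      have hfxle : f x ≤ ‖f‖ := by
        have := f.le_opNorm x
        rw [hx, mul_one] at this
        calc f x ≤ ‖f x‖ := le_abs_self _
          _ ≤ ‖f‖ := this
      set fh : X →L[ℝ] ℝ := ‖f‖⁻¹ • f with hfh
      have hfh1 : ‖fh‖ = 1 := norm_smul_inv_norm hf0
      set δ₁ := 1 - (1 - δ) / ‖f‖ with hδ₁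
      have hδ₁pos : 0 < δ₁ := by
        rw [hδ₁, sub_pos]
        exact (div_lt_one hfpos).mpr (lt_of_lt_of_le hfx hfxle)
      have hfhval : ∀ y : X, fh y = ‖f‖⁻¹ * f y := fun y => rfl
      have hiff : ∀ y : X, (1 - δ₁ < fh y ↔ 1 - δ < f y) := by
        intro y
        have hval : fh y = f y / ‖f‖ := by
          rw [hfh]
          simp [ContinuousLinearMap.smul_apply, smul_eq_mul, div_eq_inv_mul]
        rw [hval, hδ₁, sub_sub_cancel, div_lt_div_iff_of_pos_right hfpos]
      have hxslice : x ∈ unitBallSlice fh δ₁ := ⟨hx.le, (hiff x).mpr hfx⟩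
      refine le_trans (csInf_le ⟨0, fun b hb => hA0 b hb⟩
        ⟨fh, δ₁, hfh1, hδ₁pos, hxslice, rfl⟩) ?_
      refine csSup_le ⟨_, ⟨x, hxslice, rfl⟩⟩ ?_
      rintro d ⟨y, ⟨hy1, hfy⟩, rfl⟩
      exact hemb y hy1 ((hiff y).mp hfy)
end

section
/- There exists a real Banach space X and a point x ∈ S_X such that Δc(x) = 2 and Dc(x) = 0. -/
/-!
Renorm `ℓ^∞(ℕ, ℝ)` so that the new closed unit ball is the closed convex hull of the old one
together with the spikes `±vₖ`, `vₖ = 𝟙 + tₖ eₖ₊₁`, `tₖ = 1 / (k + 1)`, and take `x = 𝟙`.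

Coordinate `0` carries no spike, so `(e₀* + eₖ₊₁*) / (2 + tₖ)` equals `1` at `vₖ` and is at most
`2 / (2 + tₖ)` on every other generator; hence `vₖ` is strongly exposed, the thin slices around it
shrink to `vₖ`, and `‖x - vₖ‖ ≤ tₖ → 0` gives `Dc x = 0`.

On the other hand `x - 2 eₖ₊₁` stays in the unit ball, `‖2 eₖ₊₁‖ ≥ 2 / (1 + tₖ) → 2`, and `(eₖ)` is
weakly null because signed finite sums of the `eₖ` have norm at most `1`. So every slice containing
`x` contains points almost at distance `2` from it, and `DeltaC x = 2`.
-/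

open Set Metric Filter

variable {X : Type*} [NormedAddCommGroup X] [NormedSpace ℝ X]

open scoped Topology

lemma sSup_norm_sub_unitBallSlice_eq_two {x : X} {f : X →L[ℝ] ℝ} {δ : ℝ} (hx : ‖x‖ ≤ 1)
    (h : ∀ ε > 0, ∃ y ∈ unitBallSlice f δ, 2 - ε < ‖x - y‖) :
    sSup ((fun y => ‖x - y‖) '' unitBallSlice f δ) = 2 := by
  obtain ⟨y, hy, -⟩ := h 1 one_pos
  refine csSup_eq_of_forall_le_of_forall_lt_exists_gt ⟨_, y, hy, rfl⟩ ?_ fun w hw => ?_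
  · rintro _ ⟨y, hy, rfl⟩
    linarith [norm_sub_le x y, hy.1]
  · obtain ⟨y, hy, hxy⟩ := h (2 - w) (by linarith)
    exact ⟨_, ⟨y, hy, rfl⟩, by linarith⟩

theorem DeltaC_eq_two_of_forall_slice {x : X} (hx : ‖x‖ = 1)
    (h : ∀ (f : X →L[ℝ] ℝ) (δ : ℝ), ‖f‖ = 1 → 0 < δ → x ∈ unitBallSlice f δ →
      ∀ ε > 0, ∃ y ∈ unitBallSlice f δ, 2 - ε < ‖x - y‖) :
    DeltaC x = 2 := by
  have hvalues : {r | ∃ (f : X →L[ℝ] ℝ) (δ : ℝ), ‖f‖ = 1 ∧ 0 < δ ∧ x ∈ unitBallSlice f δ ∧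
      r = sSup ((fun y => ‖x - y‖) '' unitBallSlice f δ)} = {2} := by
    refine Set.eq_singleton_iff_unique_mem.2 ⟨?_, ?_⟩
    · obtain ⟨g, hg, hgx⟩ := exists_dual_vector ℝ x (norm_ne_zero_iff.1 (by simp [hx]))
      have hxg : x ∈ unitBallSlice g 1 := ⟨hx.le, by simp [hgx, hx]⟩
      exact ⟨g, 1, hg, one_pos, hxg,
        (sSup_norm_sub_unitBallSlice_eq_two hx.le (h g 1 hg one_pos hxg)).symm⟩
    · rintro r ⟨f, δ, hf, hδ, hxS, rfl⟩
      exact sSup_norm_sub_unitBallSlice_eq_two hx.le (h f δ hf hδ hxS)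
  rw [DeltaC, hvalues, csInf_singleton]

theorem DeltaC_eq_two_of_weakly_null {x : X} (hx : ‖x‖ = 1) (d : ℕ → X)
    (hd : ∀ k, ‖x - d k‖ ≤ 1) (hd_norm : Tendsto (fun k => ‖d k‖) atTop (𝓝 2))
    (hd_weak : ∀ f : X →L[ℝ] ℝ, Tendsto (fun k => f (d k)) atTop (𝓝 0)) :
    DeltaC x = 2 := by
  refine DeltaC_eq_two_of_forall_slice hx fun f δ _ _ hxS ε hε => ?_
  have hnorm : ∀ᶠ k in atTop, 2 - ε < ‖d k‖ := hd_norm.eventually (lt_mem_nhds (by linarith))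
  have hslice : ∀ᶠ k in atTop, f (d k) < f x - (1 - δ) :=
    (hd_weak f).eventually (gt_mem_nhds (by linarith [hxS.2]))
  obtain ⟨k, hk_norm, hk_slice⟩ := (hnorm.and hslice).exists
  exact ⟨x - d k, ⟨hd k, by rw [map_sub]; linarith⟩, by rwa [sub_sub_cancel]⟩

theorem Dc_eq_zero_of_forall_slice {x : X}
    (h : ∀ ε > 0, ∃ (f : X →L[ℝ] ℝ) (δ : ℝ), ‖f‖ = 1 ∧ 0 < δ ∧
      ∀ y ∈ unitBallSlice f δ, ‖x - y‖ ≤ ε) :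
    Dc x = 0 := by
  have hnonneg : ∀ r ∈ {r | ∃ (f : X →L[ℝ] ℝ) (δ : ℝ), ‖f‖ = 1 ∧ 0 < δ ∧
      r = sSup ((fun y => ‖x - y‖) '' unitBallSlice f δ)}, 0 ≤ r := by
    rintro r ⟨f, δ, -, -, rfl⟩
    exact Real.sSup_nonneg (by rintro _ ⟨y, -, rfl⟩; exact norm_nonneg _)
  obtain ⟨f₁, δ₁, hf₁, hδ₁, -⟩ := h 1 one_pos
  refine le_antisymm (le_of_forall_pos_le_add fun ε hε => ?_)
    (le_csInf ⟨_, f₁, δ₁, hf₁, hδ₁, rfl⟩ hnonneg)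
  obtain ⟨f, δ, hf, hδ, hfδ⟩ := h ε hε
  rw [zero_add]
  refine (csInf_le ⟨0, hnonneg⟩ ⟨f, δ, hf, hδ, rfl⟩).trans (Real.sSup_le ?_ hε.le)
  rintro _ ⟨y, hy, rfl⟩
  exact hfδ y hy

theorem tendsto_apply_zero_of_norm_sum_smul_le {u : ℕ → X} {C : ℝ}
    (hu : ∀ (F : Finset ℕ) (ε : ℕ → ℝ), (∀ k, |ε k| ≤ 1) → ‖∑ k ∈ F, ε k • u k‖ ≤ C)
    (f : X →L[ℝ] ℝ) : Tendsto (fun k => f (u k)) atTop (𝓝 0) := by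
  have hsign : ∀ k, |(SignType.sign (f (u k)) : ℝ)| ≤ 1 := fun k => by
    cases SignType.sign (f (u k)) <;> simp
  have hsum : Summable fun k => |f (u k)| := by
    refine summable_of_sum_le (c := ‖f‖ * C) (fun k => abs_nonneg _) fun F => ?_
    calc ∑ k ∈ F, |f (u k)| = f (∑ k ∈ F, (SignType.sign (f (u k)) : ℝ) • u k) := by
          simp [map_sum, sign_mul_self]
      _ ≤ ‖f‖ * C := (le_abs_self _).trans ((f.le_opNorm _).trans
          (mul_le_mul_of_nonneg_left (hu F _ hsign) (norm_nonneg f)))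
  exact (tendsto_zero_iff_abs_tendsto_zero _).2 hsum.tendsto_atTop_zero

theorem ContinuousLinearMap.norm_le_of_closedBall_subset_closedConvexHull {s : Set X}
    (hball : closedBall 0 1 ⊆ closedConvexHull ℝ s) {g : X →L[ℝ] ℝ} {c : ℝ}
    (hg : ∀ p ∈ s, g p ≤ c) : ‖g‖ ≤ c := by
  have hle : ∀ p ∈ closedBall (0 : X) 1, g p ≤ c := fun p hp =>
    closedConvexHull_min (t := {p | g p ≤ c}) hg (convex_halfSpace_le g.isLinear c)
      (isClosed_le g.continuous continuous_const) (hball hp)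
  have hc : 0 ≤ c := by simpa using hle 0 (mem_closedBall_self zero_le_one)
  refine g.opNorm_le_of_unit_norm hc fun p hp => abs_le.2 ⟨?_, hle p (by simp [hp])⟩
  have := hle (-p) (by simp [hp])
  rw [map_neg] at this
  linarith

theorem mul_norm_sub_le_of_mem_unitBallSlice {s : Set X} (hs : s ⊆ closedBall 0 1)
    (hball : closedBall 0 1 ⊆ closedConvexHull ℝ s) {g : X →L[ℝ] ℝ} {v : X} (hv : v ∈ s)
    (hgv : g v = 1) {γ : ℝ} (hγ : 0 ≤ γ) (hg : ∀ p ∈ s, p ≠ v → g p ≤ 1 - γ) {δ : ℝ} {y : X}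
    (hy : y ∈ unitBallSlice g δ) : γ * ‖y - v‖ ≤ 2 * δ := by
  have hconv : ConvexOn ℝ univ fun z => γ * dist z v + 2 * g z :=
    (((convexOn_dist v convex_univ).smul hγ).add
      ((2 • g : X →L[ℝ] ℝ).toLinearMap.convexOn convex_univ)).congr fun z _ => by simp
  let T : Set X := {z ∈ univ | γ * dist z v + 2 * g z ≤ 2}
  have hT : Convex ℝ T := hconv.convex_le 2
  have hsT : s ⊆ T := by
    intro p hp
    refine ⟨mem_univ p, ?_⟩
    rcases eq_or_ne p v with rfl | hpv
    · simp [hgv]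
    · have hdist : dist p v ≤ 2 := by
        linarith [dist_le_norm_add_norm p v, mem_closedBall_zero_iff.1 (hs hp),
          mem_closedBall_zero_iff.1 (hs hv)]
      nlinarith [hg p hp hpv]
  have hTclosed : IsClosed T := by
    simp only [T, mem_univ, true_and]
    exact isClosed_le (by fun_prop) continuous_const
  have hyT := closedConvexHull_min hsT hT hTclosed (hball (mem_closedBall_zero_iff.2 hy.1))
  rw [← dist_eq_norm]
  linarith [hyT.2, hy.2]

variable (X) in
/-- Data for a renorming of `X` whose new closed unit ball is the closed convex hull of `gen`. -/
structure Renorming where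
  gen : Set X
  neg_mem_gen : ∀ z ∈ gen, -z ∈ gen
  closedBall_subset_gen : closedBall (0 : X) 1 ⊆ gen
  isBounded_gen : Bornology.IsBounded gen

namespace Renorming

variable (b : Renorming X)

def ball : Set X := closedConvexHull ℝ b.gen

lemma gen_subset_ball : b.gen ⊆ b.ball := subset_closedConvexHull

lemma convex_ball : Convex ℝ b.ball := convex_closedConvexHull

lemma isClosed_ball : IsClosed b.ball := isClosed_closedConvexHull

lemma neg_mem_ball {z : X} (hz : z ∈ b.ball) : -z ∈ b.ball := by
  have : b.ball ⊆ -b.ball :=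
    closedConvexHull_min (fun p hp => b.gen_subset_ball (by simpa using b.neg_mem_gen p hp))
      b.convex_ball.neg b.isClosed_ball.neg
  simpa using this hz

lemma ball_mem_nhds : b.ball ∈ 𝓝 (0 : X) :=
  mem_of_superset (closedBall_mem_nhds 0 one_pos) (b.closedBall_subset_gen.trans b.gen_subset_ball)

lemma exists_ball_subset_closedBall : ∃ R, 0 < R ∧ b.ball ⊆ closedBall 0 R := by
  obtain ⟨R, hR, hgen⟩ := b.isBounded_gen.subset_closedBall_lt 0 0
  exact ⟨R, hR, closedConvexHull_min hgen (convex_closedBall 0 R) isClosed_closedBall⟩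

noncomputable def seminorm : Seminorm ℝ X :=
  gaugeSeminorm ((balanced_iff_neg_mem b.convex_ball).2 fun _ => b.neg_mem_ball) b.convex_ball
    (absorbent_nhds_zero b.ball_mem_nhds)

lemma seminorm_apply (z : X) : b.seminorm z = gauge b.ball z := rfl

lemma seminorm_le_norm (z : X) : b.seminorm z ≤ ‖z‖ := by
  simpa [seminorm_apply] using mul_gauge_le_norm (r := 1) (x := z)
    (ball_subset_closedBall.trans (b.closedBall_subset_gen.trans b.gen_subset_ball))

lemma exists_norm_le_mul_seminorm : ∃ R, 0 < R ∧ ∀ z, ‖z‖ ≤ R * b.seminorm z := by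
  obtain ⟨R, hR, hball⟩ := b.exists_ball_subset_closedBall
  refine ⟨R, hR, fun z => ?_⟩
  have := gauge_mono (absorbent_nhds_zero b.ball_mem_nhds) hball z
  rw [gauge_closedBall hR.le, div_le_iff₀ hR] at this
  rw [seminorm_apply]
  linarith

lemma seminorm_le_one_iff {z : X} : b.seminorm z ≤ 1 ↔ z ∈ b.ball := by
  rw [seminorm_apply, gauge_le_one_iff_mem_closure b.convex_ball b.ball_mem_nhds,
    b.isClosed_ball.closure_eq]

def Space (_ : Renorming X) : Type _ := X

instance : AddCommGroup b.Space := inferInstanceAs (AddCommGroup X)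

instance : Module ℝ b.Space := inferInstanceAs (Module ℝ X)

noncomputable instance : NormedAddCommGroup b.Space :=
  AddGroupNorm.toNormedAddCommGroup
    { toFun := b.seminorm
      map_zero' := map_zero b.seminorm
      add_le' := map_add_le_add b.seminorm
      neg' := map_neg_eq_map b.seminorm
      eq_zero_of_map_eq_zero' := fun z hz => by
        obtain ⟨R, -, hR⟩ := b.exists_norm_le_mul_seminorm
        have hz' : ‖(show X from z)‖ ≤ 0 := by simpa [hz] using hR z
        exact norm_le_zero_iff.1 hz' }

noncomputable instance : NormedSpace ℝ b.Space where
  norm_smul_le a z := (map_smul_eq_mul b.seminorm a z).le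

noncomputable def equiv : X ≃L[ℝ] b.Space :=
  { LinearEquiv.refl ℝ X with
    continuous_toFun := AddMonoidHomClass.continuous_of_bound
      (show X ≃ₗ[ℝ] b.Space from LinearEquiv.refl ℝ X) 1 fun z => by
        rw [one_mul]
        exact b.seminorm_le_norm z
    continuous_invFun := by
      obtain ⟨R, -, hR⟩ := b.exists_norm_le_mul_seminorm
      exact AddMonoidHomClass.continuous_of_bound
        (show b.Space ≃ₗ[ℝ] X from LinearEquiv.refl ℝ X) R hR }

lemma norm_equiv_le (z : X) : ‖b.equiv z‖ ≤ ‖z‖ := b.seminorm_le_norm z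

lemma norm_equiv_le_one_iff {z : X} : ‖b.equiv z‖ ≤ 1 ↔ z ∈ b.ball := b.seminorm_le_one_iff

instance [CompleteSpace X] : CompleteSpace b.Space :=
  (completeSpace_congr (e := b.equiv.toLinearEquiv.toEquiv) b.equiv.isUniformEmbedding).1 ‹_›

lemma image_gen_subset_closedBall : b.equiv '' b.gen ⊆ closedBall 0 1 := by
  rintro _ ⟨z, hz, rfl⟩
  exact mem_closedBall_zero_iff.2 (b.norm_equiv_le_one_iff.2 (b.gen_subset_ball hz))

lemma closedBall_subset_closedConvexHull :
    closedBall (0 : b.Space) 1 ⊆ closedConvexHull ℝ (b.equiv '' b.gen) := by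
  intro y hy
  have hball : b.ball ⊆ b.equiv ⁻¹' closedConvexHull ℝ (b.equiv '' b.gen) :=
    closedConvexHull_min
      (fun z hz => mem_preimage.2 (subset_closedConvexHull (mem_image_of_mem b.equiv hz)))
      (convex_closedConvexHull.is_linear_preimage b.equiv.toLinearEquiv.isLinear)
      (isClosed_closedConvexHull.preimage b.equiv.continuous)
  have hy' : b.equiv.symm y ∈ b.ball := by
    rw [← norm_equiv_le_one_iff, ContinuousLinearEquiv.apply_symm_apply]
    exact mem_closedBall_zero_iff.1 hy
  simpa using hball hy'

theorem norm_le_of_forall_le {g : b.Space →L[ℝ] ℝ} {c : ℝ}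
    (h : ∀ z ∈ b.gen, g (b.equiv z) ≤ c) : ‖g‖ ≤ c :=
  g.norm_le_of_closedBall_subset_closedConvexHull b.closedBall_subset_closedConvexHull
    (by rintro _ ⟨z, hz, rfl⟩; exact h z hz)

end Renorming

open scoped lp ENNReal

namespace SpikedLInfty

noncomputable def height (k : ℕ) : ℝ := 1 / (k + 1)

lemma height_pos (k : ℕ) : 0 < height k := by unfold height; positivity

lemma height_le_one (k : ℕ) : height k ≤ 1 := by
  rw [height, div_le_one (by positivity)]
  simp

lemma tendsto_height : Tendsto height atTop (𝓝 0) := tendsto_one_div_add_atTop_nhds_zero_nat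

noncomputable def unitVec (i : ℕ) : ℓ^∞(ℕ, ℝ) := lp.single ∞ i 1

lemma unitVec_apply (i j : ℕ) : unitVec i j = if j = i then 1 else 0 := by
  simp [unitVec, lp.single_apply, Pi.single_apply]

noncomputable def spike (k : ℕ) : ℓ^∞(ℕ, ℝ) := 1 + height k • unitVec (k + 1)

lemma spike_apply (k i : ℕ) : spike k i = 1 + if i = k + 1 then height k else 0 := by
  rw [spike, lp.coeFn_add, lp.coeFn_smul, lp.infty_coeFn_one]
  simp [unitVec_apply]

lemma norm_spike_le (k : ℕ) : ‖spike k‖ ≤ 2 :=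
  lp.norm_le_of_forall_le zero_le_two fun i => by
    rw [Real.norm_eq_abs, spike_apply]
    split_ifs <;> rw [abs_le] <;> constructor <;> linarith [height_pos k, height_le_one k]

def gen : Set ℓ^∞(ℕ, ℝ) := closedBall 0 1 ∪ range spike ∪ range (-spike)

noncomputable def renorming : Renorming ℓ^∞(ℕ, ℝ) where
  gen := gen
  neg_mem_gen := by
    rintro z ((hz | ⟨k, rfl⟩) | ⟨k, rfl⟩)
    · exact Or.inl (Or.inl (by simpa using hz))
    · exact Or.inr ⟨k, rfl⟩
    · exact Or.inl (Or.inr ⟨k, by simp⟩)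
  closedBall_subset_gen := subset_union_left.trans subset_union_left
  isBounded_gen := by
    refine isBounded_closedBall (x := 0) (r := 2) |>.subset ?_
    rintro z ((hz | ⟨k, rfl⟩) | ⟨k, rfl⟩) <;> rw [mem_closedBall_zero_iff]
    · linarith [mem_closedBall_zero_iff.1 hz]
    · exact norm_spike_le k
    · simpa using norm_spike_le k

lemma apply_le_one_of_mem_gen {z : ℓ^∞(ℕ, ℝ)} (hz : z ∈ gen) {i : ℕ}
    (hi : ∀ k, z = spike k → i ≠ k + 1) : z i ≤ 1 := by
  rcases hz with (hz | ⟨k, rfl⟩) | ⟨k, rfl⟩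
  · exact (le_abs_self _).trans
      ((lp.norm_apply_le_norm ENNReal.top_ne_zero z i).trans (mem_closedBall_zero_iff.1 hz))
  · simp [spike_apply, hi k rfl]
  · simp only [Pi.neg_apply, lp.coeFn_neg, spike_apply]
    split_ifs <;> linarith [height_pos k]

lemma apply_succ_le_of_mem_gen {z : ℓ^∞(ℕ, ℝ)} (hz : z ∈ gen) (k : ℕ) :
    z (k + 1) ≤ 1 + height k := by
  by_cases hzk : z = spike k
  · simp [hzk, spike_apply]
  · refine (apply_le_one_of_mem_gen hz fun j hj hkj => hzk ?_).trans (by linarith [height_pos k])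
    rw [hj, Nat.add_right_cancel hkj]

lemma norm_one_sub_two_smul_unitVec_le (i : ℕ) : ‖(1 : ℓ^∞(ℕ, ℝ)) - (2 : ℝ) • unitVec i‖ ≤ 1 :=
  lp.norm_le_of_forall_le zero_le_one fun j => by
    rw [Real.norm_eq_abs, lp.coeFn_sub, lp.coeFn_smul, lp.infty_coeFn_one]
    simp only [Pi.sub_apply, Pi.one_apply, Pi.smul_apply, unitVec_apply, smul_eq_mul]
    split_ifs <;> norm_num

lemma norm_sum_smul_unitVec_le (F : Finset ℕ) {ε : ℕ → ℝ} (hε : ∀ k, |ε k| ≤ 1) :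
    ‖∑ k ∈ F, ε k • unitVec k‖ ≤ 1 :=
  lp.norm_le_of_forall_le zero_le_one fun j => by
    rw [Real.norm_eq_abs, lp.coeFn_sum, Finset.sum_apply]
    simp only [lp.coeFn_smul, Pi.smul_apply, unitVec_apply, smul_eq_mul, mul_ite, mul_one,
      mul_zero, Finset.sum_ite_eq]
    split_ifs
    · exact hε j
    · simp

noncomputable def coord (i : ℕ) : renorming.Space →L[ℝ] ℝ :=
  (lp.evalCLM ℝ (fun _ : ℕ => ℝ) ∞ i).comp (renorming.equiv.symm : renorming.Space →L[ℝ] _)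

lemma coord_equiv (i : ℕ) (z : ℓ^∞(ℕ, ℝ)) : coord i (renorming.equiv z) = z i := by
  simp [coord, lp.evalCLM]

lemma norm_equiv_one : ‖renorming.equiv 1‖ = 1 := by
  refine le_antisymm ((renorming.norm_equiv_le 1).trans norm_one.le) ?_
  have hcoord : ‖coord 0‖ ≤ 1 := renorming.norm_le_of_forall_le fun z hz => by
    rw [coord_equiv]
    exact apply_le_one_of_mem_gen hz fun k _ => (Nat.succ_ne_zero k).symm
  have := (coord 0).le_opNorm (renorming.equiv 1)
  rw [coord_equiv, lp.infty_coeFn_one, Pi.one_apply, norm_one] at this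
  nlinarith [norm_nonneg (renorming.equiv 1)]

lemma norm_equiv_two_smul_unitVec_le (i : ℕ) : ‖renorming.equiv ((2 : ℝ) • unitVec i)‖ ≤ 2 :=
  (renorming.norm_equiv_le _).trans (lp.norm_le_of_forall_le zero_le_two fun j => by
    simp only [Real.norm_eq_abs, lp.coeFn_smul, Pi.smul_apply, unitVec_apply, smul_eq_mul]
    split_ifs <;> norm_num)

lemma two_sub_two_mul_height_le_norm (k : ℕ) :
    2 - 2 * height k ≤ ‖renorming.equiv ((2 : ℝ) • unitVec (k + 1))‖ := by
  set d := renorming.equiv ((2 : ℝ) • unitVec (k + 1))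
  have hcoord : ‖coord (k + 1)‖ ≤ 1 + height k := renorming.norm_le_of_forall_le fun z hz => by
    rw [coord_equiv]
    exact apply_succ_le_of_mem_gen hz k
  have hval : coord (k + 1) d = 2 := by simp [d, coord_equiv, unitVec_apply]
  have hle := (coord (k + 1)).le_opNorm d
  rw [hval, Real.norm_ofNat] at hle
  nlinarith [height_pos k, norm_nonneg d, norm_equiv_two_smul_unitVec_le (k + 1)]

lemma tendsto_norm_equiv_two_smul_unitVec :
    Tendsto (fun k => ‖renorming.equiv ((2 : ℝ) • unitVec (k + 1))‖) atTop (𝓝 2) := by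
  refine tendsto_of_tendsto_of_tendsto_of_le_of_le ?_ tendsto_const_nhds
    two_sub_two_mul_height_le_norm fun k => norm_equiv_two_smul_unitVec_le (k + 1)
  simpa using (tendsto_height.const_mul 2).const_sub 2

lemma tendsto_apply_equiv_unitVec (f : renorming.Space →L[ℝ] ℝ) :
    Tendsto (fun k => f (renorming.equiv (unitVec k))) atTop (𝓝 0) :=
  tendsto_apply_zero_of_norm_sum_smul_le (C := 1) (fun F ε hε => by
    simpa [map_sum] using (renorming.norm_equiv_le _).trans (norm_sum_smul_unitVec_le F hε)) f

theorem DeltaC_equiv_one : DeltaC (renorming.equiv 1) = 2 := by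
  refine DeltaC_eq_two_of_weakly_null norm_equiv_one
    (fun k => renorming.equiv ((2 : ℝ) • unitVec (k + 1))) (fun k => ?_) ?_ fun f => ?_
  · rw [← map_sub]
    exact (renorming.norm_equiv_le _).trans (norm_one_sub_two_smul_unitVec_le _)
  · exact tendsto_norm_equiv_two_smul_unitVec
  · simpa using ((tendsto_apply_equiv_unitVec f).comp (tendsto_add_atTop_nat 1)).const_mul 2

lemma spike_mem_gen (m : ℕ) : spike m ∈ gen := Or.inl (Or.inr ⟨m, rfl⟩)

noncomputable def exposingFunctional (m : ℕ) : renorming.Space →L[ℝ] ℝ :=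
  (2 + height m)⁻¹ • (coord 0 + coord (m + 1))

lemma exposingFunctional_equiv (m : ℕ) (z : ℓ^∞(ℕ, ℝ)) :
    exposingFunctional m (renorming.equiv z) = (z 0 + z (m + 1)) / (2 + height m) := by
  simp [exposingFunctional, coord_equiv, div_eq_inv_mul, mul_add]

lemma exposingFunctional_equiv_spike (m : ℕ) :
    exposingFunctional m (renorming.equiv (spike m)) = 1 := by
  rw [exposingFunctional_equiv, spike_apply, spike_apply, if_neg (Nat.succ_ne_zero m).symm,
    if_pos rfl, div_eq_one_iff_eq (by linarith [height_pos m])]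
  ring

lemma exposingFunctional_equiv_le {z : ℓ^∞(ℕ, ℝ)} (hz : z ∈ gen) {m : ℕ} (hzm : z ≠ spike m) :
    exposingFunctional m (renorming.equiv z) ≤ 1 - height m / (2 + height m) := by
  have h0 : z 0 ≤ 1 := apply_le_one_of_mem_gen hz fun k _ => (Nat.succ_ne_zero k).symm
  have hm : z (m + 1) ≤ 1 := apply_le_one_of_mem_gen hz fun k hk hmk => hzm (by
    rw [hk, Nat.add_right_cancel hmk])
  have hpos : 0 < 2 + height m := by linarith [height_pos m]
  rw [exposingFunctional_equiv, one_sub_div hpos.ne', add_sub_cancel_right]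
  exact div_le_div_of_nonneg_right (by linarith) hpos.le

lemma norm_exposingFunctional (m : ℕ) : ‖exposingFunctional m‖ = 1 := by
  have hle : ∀ z ∈ gen, exposingFunctional m (renorming.equiv z) ≤ 1 := fun z hz => by
    rcases eq_or_ne z (spike m) with rfl | hzm
    · exact (exposingFunctional_equiv_spike m).le
    · exact (exposingFunctional_equiv_le hz hzm).trans (by
        have := height_pos m
        linarith [div_pos this (by linarith : (0 : ℝ) < 2 + height m)])
  refine le_antisymm (renorming.norm_le_of_forall_le hle) ?_
  have := (exposingFunctional m).le_opNorm (renorming.equiv (spike m))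
  rw [exposingFunctional_equiv_spike, norm_one] at this
  have hspike := renorming.norm_equiv_le_one_iff.2 (renorming.gen_subset_ball (spike_mem_gen m))
  nlinarith [norm_nonneg (exposingFunctional m)]

lemma norm_sub_spike_le_of_mem_unitBallSlice (m : ℕ) {y : renorming.Space}
    (hy : y ∈ unitBallSlice (exposingFunctional m) (height m / (2 + height m) * height m / 2)) :
    ‖y - renorming.equiv (spike m)‖ ≤ height m := by
  have hγ : 0 < height m / (2 + height m) := div_pos (height_pos m) (by linarith [height_pos m])
  have := mul_norm_sub_le_of_mem_unitBallSlice renorming.image_gen_subset_closedBall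
    renorming.closedBall_subset_closedConvexHull (mem_image_of_mem _ (spike_mem_gen m))
    (exposingFunctional_equiv_spike m) hγ.le ?_ hy
  · exact le_of_mul_le_mul_left (by linarith) hγ
  · rintro _ ⟨z, hz, rfl⟩ hne
    exact exposingFunctional_equiv_le hz fun h => hne (h ▸ rfl)

lemma norm_equiv_one_sub_spike_le (m : ℕ) :
    ‖renorming.equiv 1 - renorming.equiv (spike m)‖ ≤ height m := by
  rw [← map_sub, spike, sub_add_cancel_left]
  refine (renorming.norm_equiv_le _).trans ?_
  rw [norm_neg, norm_smul, unitVec, lp.norm_single (by simp), norm_one, mul_one,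
    Real.norm_of_nonneg (height_pos m).le]

theorem Dc_equiv_one : Dc (renorming.equiv 1) = 0 := by
  refine Dc_eq_zero_of_forall_slice fun ε hε => ?_
  obtain ⟨m, hm⟩ := (tendsto_height.eventually (gt_mem_nhds (half_pos hε))).exists
  have hδ : 0 < height m / (2 + height m) * height m / 2 := by
    have := height_pos m
    positivity
  refine ⟨exposingFunctional m, _, norm_exposingFunctional m, hδ, fun y hy => ?_⟩
  calc ‖renorming.equiv 1 - y‖
      ≤ ‖renorming.equiv 1 - renorming.equiv (spike m)‖ + ‖y - renorming.equiv (spike m)‖ := by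
        rw [norm_sub_rev y]
        exact norm_sub_le_norm_sub_add_norm_sub _ _ _
    _ ≤ ε := by
        linarith [norm_equiv_one_sub_spike_le m, norm_sub_spike_le_of_mem_unitBallSlice m hy]

end SpikedLInfty

/-- There exist a real Banach space and a unit-sphere point whose Δ-constant is 2 while its
Daugavet constant is 0. -/
theorem exists_deltaPoint_with_daugavetConstant_zero :
    ∃ (Y : Type) (_ : NormedAddCommGroup Y) (_ : NormedSpace ℝ Y) (_ : CompleteSpace Y)
      (x : Y), ‖x‖ = 1 ∧ DeltaC x = 2 ∧ Dc x = 0 :=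
  ⟨SpikedLInfty.renorming.Space, inferInstance, inferInstance, inferInstance,
    SpikedLInfty.renorming.equiv 1, SpikedLInfty.norm_equiv_one, SpikedLInfty.DeltaC_equiv_one,
    SpikedLInfty.Dc_equiv_one⟩
end
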